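/- arXiv:2511.05806 — 2 statements merged into one kernel-verified Lean document; each statement's English description precedes it below -/
import Mathlib

section
/- Let S be a free numerical semigroup generated by a telescopic sequence T = (t_0, …, t_k) with gcd(T) = 1, let c(T) = (c_1, …, c_k), and let I = {0 ≤ i ≤ k : t_i is even}. If t_0 is odd, then O(G(S)) − E(G(S)) = −1/2 + (1/2)∏_{i ∈ I} c_i; equivalently, 2(O(G(S)) − E(G(S))) = −1 + ∏_{i ∈ I} c_i. -/
/-- The monoid `⟨t_0, …, t_{n-1}⟩` of all nonnegative integer linear combinations of
the first `n` terms of the sequence `t`. -/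
def genBy (t : ℕ → ℕ) (n : ℕ) : Set ℕ :=
  {s | ∃ x : ℕ → ℕ, s = ∑ i ∈ Finset.range n, x i * t i}

/-- `d_i = gcd(t_0, …, t_i)`. -/
def seqD (t : ℕ → ℕ) (i : ℕ) : ℕ := Finset.gcd (Finset.range (i + 1)) t

/-- `c_j = d_{j-1} / d_j` (for `j ≥ 1`). -/
def seqC (t : ℕ → ℕ) (j : ℕ) : ℕ := seqD t (j - 1) / seqD t j

/-- The sequence `(t_0, …, t_k)` of positive integers is telescopic if
`c_j · t_j ∈ ⟨t_0, …, t_{j-1}⟩` for every `j = 1, …, k`. -/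
def IsTelescopic (t : ℕ → ℕ) (k : ℕ) : Prop :=
  (∀ i ≤ k, 0 < t i) ∧ ∀ j, 1 ≤ j → j ≤ k → seqC t j * t j ∈ genBy t j

/-- `O(T)`: the number of odd elements of `T`. -/
noncomputable def countOdd (T : Set ℕ) : ℕ := {x ∈ T | Odd x}.ncard

/-- `E(T)`: the number of even elements of `T`. -/
noncomputable def countEven (T : Set ℕ) : ℕ := {x ∈ T | Even x}.ncard

/-!
Let `d = gcd(t_0, …, t_{k-1})` and `T = t_k`. Telescopy (`d T ∈ ⟨t_0, …, t_{k-1}⟩`)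
makes `S = ⟨t_0, …, t_k⟩` the gluing of `S' = ⟨t_0/d, …, t_{k-1}/d⟩` with `T`: its elements
are the `x T + d m` with `x < d` and `m ∈ S'`. As `d ∣ t_0` is odd and coprime to `T`, the
gaps of `S` in the residue class of `x T` modulo `d` are the `x T + d g` with `g` a gap of
`S'`, together with the numbers below `x T` in that class. Summing `(-1)^n` over them turns
`σ(S) = ∑_{g ∉ S} (-1)^g = E - O` into `1 - 2 σ(S) = (1 - 2 σ(S')) ∑_{x < d} (-1)^{x T}`,
and the last factor is `d = c_k` for even `T` and `1` for odd `T`. Induction on `k` gives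
`1 - 2 σ(S) = ∏_{i ∈ I} c_i`.
-/

open Finset

namespace genBy

variable {t : ℕ → ℕ} {n : ℕ}

lemma add_mem {a b : ℕ} (ha : a ∈ genBy t n) (hb : b ∈ genBy t n) : a + b ∈ genBy t n := by
  obtain ⟨x, rfl⟩ := ha
  obtain ⟨y, rfl⟩ := hb
  exact ⟨fun i => x i + y i, by simp only [add_mul, sum_add_distrib]⟩

lemma mul_mem {a : ℕ} (m : ℕ) (ha : a ∈ genBy t n) : m * a ∈ genBy t n := by
  obtain ⟨x, rfl⟩ := ha
  exact ⟨fun i => m * x i, by simp only [mul_sum, mul_assoc]⟩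

lemma apply_mem {i : ℕ} (hi : i < n) : t i ∈ genBy t n :=
  ⟨Pi.single i 1, by simp [Pi.single_apply, hi]⟩

lemma mono {m : ℕ} (h : n ≤ m) : genBy t n ⊆ genBy t m := by
  rintro s ⟨x, rfl⟩
  refine ⟨fun i => if i < n then x i else 0, ?_⟩
  rw [← sum_range_add_sum_Ico _ h]
  simp +contextual [sum_ite, filter_true_of_mem, filter_false_of_mem]

lemma mem_succ_iff {s : ℕ} :
    s ∈ genBy t (n + 1) ↔ ∃ a ∈ genBy t n, ∃ y, s = a + y * t n := by
  constructor
  · rintro ⟨x, rfl⟩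
    exact ⟨_, ⟨x, rfl⟩, x n, sum_range_succ _ _⟩
  · rintro ⟨a, ha, y, rfl⟩
    exact add_mem (mono n.le_succ ha) (mul_mem y (apply_mem n.lt_succ_self))

lemma mem_iff_of_dvd {d : ℕ} (hdvd : ∀ i < n, d ∣ t i) {s : ℕ} :
    s ∈ genBy t n ↔ ∃ m ∈ genBy (fun i => t i / d) n, s = d * m := by
  have key (x : ℕ → ℕ) : ∑ i ∈ range n, x i * t i = d * ∑ i ∈ range n, x i * (t i / d) := by
    rw [mul_sum]
    refine sum_congr rfl fun i hi => ?_
    rw [mul_left_comm, Nat.mul_div_cancel' (hdvd i (mem_range.1 hi))]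
  constructor
  · rintro ⟨x, rfl⟩
    exact ⟨_, ⟨x, rfl⟩, key x⟩
  · rintro ⟨m, ⟨x, rfl⟩, rfl⟩
    exact ⟨x, (key x).symm⟩

end genBy

section SeqD

variable {t : ℕ → ℕ} {d : ℕ}

lemma seqD_dvd {i j : ℕ} (h : j ≤ i) : seqD t i ∣ t j :=
  Finset.gcd_dvd (mem_range.2 (Nat.lt_succ_of_le h))

lemma seqD_succ (i : ℕ) : seqD t (i + 1) = Nat.gcd (t (i + 1)) (seqD t i) := by
  rw [seqD, range_add_one, gcd_insert]
  rfl

lemma dvd_seqD_iff {j : ℕ} : d ∣ seqD t j ↔ ∀ i ≤ j, d ∣ t i := by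
  simp [seqD, Finset.dvd_gcd_iff]

lemma seqD_div {j : ℕ} (hdvd : ∀ i ≤ j, d ∣ t i) :
    seqD (fun i => t i / d) j = seqD t j / d := by
  obtain rfl | hd := d.eq_zero_or_pos
  · simp [seqD, Finset.gcd_eq_zero_iff]
  have : seqD t j = d * seqD (fun i => t i / d) j := by
    rw [seqD, seqD, ← normalize_eq d, ← Finset.gcd_mul_left, normalize_eq]
    exact gcd_congr rfl fun i hi =>
      (Nat.mul_div_cancel' (hdvd i (Nat.lt_succ_iff.1 (mem_range.1 hi)))).symm
  rw [this, Nat.mul_div_cancel_left _ hd]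

lemma seqC_div {j : ℕ} (hd : 0 < d) (hdvd : ∀ i ≤ j, d ∣ t i) :
    seqC (fun i => t i / d) j = seqC t j := by
  obtain ⟨a, ha⟩ := dvd_seqD_iff.2 hdvd
  obtain ⟨b, hb⟩ := dvd_seqD_iff.2 fun i hi => hdvd i (hi.trans (j.sub_le 1))
  rw [seqC, seqC, seqD_div hdvd, seqD_div fun i hi => hdvd i (hi.trans (j.sub_le 1)), ha, hb,
    Nat.mul_div_cancel_left _ hd, Nat.mul_div_cancel_left _ hd, Nat.mul_div_mul_left _ _ hd]

lemma IsTelescopic.mono {k m : ℕ} (htel : IsTelescopic t k) (h : m ≤ k) : IsTelescopic t m :=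
  ⟨fun i hi => htel.1 i (hi.trans h), fun j h1 h2 => htel.2 j h1 (h2.trans h)⟩

lemma IsTelescopic.div {k : ℕ} (htel : IsTelescopic t k) (hd : 0 < d)
    (hdvd : ∀ i ≤ k, d ∣ t i) : IsTelescopic (fun i => t i / d) k := by
  refine ⟨fun i hi => Nat.div_pos (Nat.le_of_dvd (htel.1 i hi) (hdvd i hi)) hd,
    fun j h1 h2 => ?_⟩
  obtain ⟨m, hm, heq⟩ :=
    (genBy.mem_iff_of_dvd fun i hi => hdvd i (by omega)).1 (htel.2 j h1 h2)
  rw [seqC_div hd fun i hi => hdvd i (hi.trans h2)]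
  convert hm using 1
  apply Nat.eq_of_mul_eq_mul_left hd
  rw [← heq, ← Nat.mul_div_cancel' (hdvd j h2)]
  ring

end SeqD

section Gluing

variable {d T : ℕ}

/-- When `T ∈ A` and `A` is additively closed, this is the gluing `d • A + ℕ • T`. -/
def glue (A : Set ℕ) (d T : ℕ) : Set ℕ := {n | ∃ x < d, ∃ m ∈ A, n = x * T + d * m}

lemma genBy_succ_eq_glue {t : ℕ → ℕ} {n : ℕ} (hd : 0 < d) (hdvd : ∀ i < n, d ∣ t i)
    (hT : d * t n ∈ genBy t n) :
    genBy t (n + 1) = glue (genBy (fun i => t i / d) n) d (t n) := by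
  ext s
  rw [genBy.mem_succ_iff]
  constructor
  · rintro ⟨a, ha, y, rfl⟩
    obtain ⟨m, hm, heq⟩ :=
      (genBy.mem_iff_of_dvd hdvd).1 (genBy.add_mem ha (genBy.mul_mem (y / d) hT))
    refine ⟨y % d, Nat.mod_lt _ hd, m, hm, ?_⟩
    rw [← heq]
    conv_lhs => rw [← Nat.div_add_mod y d]
    ring
  · rintro ⟨x, -, m, hm, rfl⟩
    exact ⟨d * m, (genBy.mem_iff_of_dvd hdvd).2 ⟨m, hm, rfl⟩, x, add_comm _ _⟩

lemma mul_mod_injOn (hcop : Nat.Coprime d T) :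
    Set.InjOn (fun x => x * T % d) (range d : Set ℕ) := fun a ha b hb hab => by
  have := Nat.ModEq.cancel_right_of_coprime hcop hab
  rwa [Nat.ModEq, Nat.mod_eq_of_lt (mem_range.1 ha), Nat.mod_eq_of_lt (mem_range.1 hb)] at this

lemma image_mul_mod_range (hd : 0 < d) (hcop : Nat.Coprime d T) :
    (range d).image (fun x => x * T % d) = range d :=
  eq_of_subset_of_card_le (fun _ hr => by
      obtain ⟨x, -, rfl⟩ := mem_image.1 hr
      exact mem_range.2 (Nat.mod_lt _ hd))
    (card_image_of_injOn (mul_mod_injOn hcop)).ge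

lemma mem_image_mod_add_mul_range (hd : 0 < d) {a n : ℕ} :
    n ∈ (range (a / d)).image (fun j => a % d + d * j) ↔ n % d = a % d ∧ n < a := by
  have ha := Nat.mod_add_div a d
  constructor
  · intro h
    obtain ⟨j, hj, rfl⟩ := mem_image.1 h
    have : d * (j + 1) ≤ d * (a / d) := Nat.mul_le_mul_left d (mem_range.1 hj)
    refine ⟨by simp, by rw [mul_add] at this; omega⟩
  · rintro ⟨hmod, hlt⟩
    have hn := Nat.mod_add_div n d
    refine mem_image.2 ⟨n / d, mem_range.2 ?_, by rw [← hmod, hn]⟩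
    exact lt_of_mul_lt_mul_left (show d * (n / d) < d * (a / d) by omega) (Nat.zero_le d)

/-- The gaps of `glue A d T` congruent to `x * T` modulo `d`, when `G` is the gap set of `A`. -/
def gapBlock (G : Finset ℕ) (d T x : ℕ) : Finset ℕ :=
  G.image (fun g => x * T + d * g) ∪ (range (x * T / d)).image (fun j => x * T % d + d * j)

def gluingGaps (G : Finset ℕ) (d T : ℕ) : Finset ℕ := (range d).biUnion (gapBlock G d T)

lemma mod_eq_of_mem_gapBlock {G : Finset ℕ} {x n : ℕ} (hd : 0 < d)
    (hn : n ∈ gapBlock G d T x) : n % d = x * T % d := by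
  rcases mem_union.1 hn with h | h
  · obtain ⟨g, -, rfl⟩ := mem_image.1 h
    simp
  · exact ((mem_image_mod_add_mul_range hd).1 h).1

lemma coe_gluingGaps {A : Set ℕ} {G : Finset ℕ} (hd : 0 < d) (hcop : Nat.Coprime d T)
    (hG : ↑G = Aᶜ) : ↑(gluingGaps G d T) = (glue A d T)ᶜ := by
  have hGmem (g : ℕ) : g ∈ G ↔ g ∉ A := by rw [← mem_coe, hG, Set.mem_compl_iff]
  ext n
  simp only [gluingGaps, coe_biUnion, Set.mem_iUnion, mem_coe, Set.mem_compl_iff, glue,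
    Set.mem_ofPred_eq, exists_prop]
  constructor
  · rintro ⟨x, hx, hn⟩ ⟨y, hy, m, hm, rfl⟩
    obtain rfl : y = x := mul_mod_injOn hcop (mem_range.2 hy) hx
      (by simpa using mod_eq_of_mem_gapBlock hd hn)
    rcases mem_union.1 hn with h | h
    · obtain ⟨g, hg, hgm⟩ := mem_image.1 h
      obtain rfl : g = m := Nat.eq_of_mul_eq_mul_left hd (by omega)
      exact (hGmem g).1 hg hm
    · exact absurd ((mem_image_mod_add_mul_range hd).1 h).2 (by omega)
  · intro hn
    obtain ⟨x, hx, hres⟩ := mem_image.1 <| (image_mul_mod_range hd hcop).symm ▸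
      mem_range.2 (Nat.mod_lt n hd)
    refine ⟨x, hx, ?_⟩
    rcases le_or_gt (x * T) n with hle | hlt
    · obtain ⟨g, hg⟩ := (Nat.modEq_iff_dvd' hle).1 hres
      have hng : n = x * T + d * g := by omega
      refine mem_union_left _ (mem_image.2 ⟨g, (hGmem g).2 fun hgA => ?_, hng.symm⟩)
      exact hn ⟨x, mem_range.1 hx, g, hgA, hng⟩
    · exact mem_union_right _ ((mem_image_mod_add_mul_range hd).2 ⟨hres.symm, hlt⟩)

end Gluing

section SignedSums

variable {d T : ℕ}

lemma two_mul_sum_range_neg_one_pow (q : ℕ) :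
    2 * ∑ j ∈ range q, (-1 : ℤ) ^ j = 1 - (-1) ^ q := by
  rw [← geom_sum_mul_neg]
  ring

lemma Odd.neg_one_pow_mul (hd : Odd d) (j : ℕ) : (-1 : ℤ) ^ (d * j) = (-1) ^ j := by
  rw [pow_mul, hd.neg_one_pow]

lemma sum_range_neg_one_pow_mul_mod (hd : Odd d) (hcop : Nat.Coprime d T) :
    ∑ x ∈ range d, (-1 : ℤ) ^ (x * T % d) = 1 := by
  rw [← sum_image (f := fun r => (-1 : ℤ) ^ r) (mul_mod_injOn hcop),
    image_mul_mod_range hd.pos hcop]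
  have := two_mul_sum_range_neg_one_pow d
  rw [hd.neg_one_pow] at this
  omega

lemma sum_range_neg_one_pow_mul (hd : Odd d) :
    ∑ x ∈ range d, (-1 : ℤ) ^ (x * T) = if Even T then (d : ℤ) else 1 := by
  split_ifs with hT
  · simp [(hT.mul_left _).neg_one_pow]
  · have := two_mul_sum_range_neg_one_pow d
    simp_rw [mul_comm _ T, (Nat.not_even_iff_odd.1 hT).neg_one_pow_mul, hd.neg_one_pow] at *
    omega

lemma two_mul_sum_gapBlock (G : Finset ℕ) (hd : Odd d) (x : ℕ) :
    2 * ∑ n ∈ gapBlock G d T x, (-1 : ℤ) ^ n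
      = (-1) ^ (x * T) * (2 * ∑ g ∈ G, (-1 : ℤ) ^ g - 1) + (-1) ^ (x * T % d) := by
  have hinj {a : ℕ} {s : Finset ℕ} : Set.InjOn (fun j => a + d * j) (s : Set ℕ) :=
    fun i _ j _ h => Nat.eq_of_mul_eq_mul_left hd.pos (Nat.add_left_cancel h)
  have hdisj : Disjoint (G.image (fun g => x * T + d * g))
      ((range (x * T / d)).image (fun j => x * T % d + d * j)) :=
    disjoint_left.2 fun n hn hn' => by
      obtain ⟨g, -, rfl⟩ := mem_image.1 hn
      exact absurd ((mem_image_mod_add_mul_range hd.pos).1 hn').2 (by omega)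
  have hsplit : (-1 : ℤ) ^ (x * T) = (-1) ^ (x * T % d) * (-1) ^ (x * T / d) := by
    conv_lhs => rw [← Nat.mod_add_div (x * T) d]
    rw [pow_add, hd.neg_one_pow_mul]
  rw [gapBlock, sum_union hdisj, sum_image hinj, sum_image hinj]
  simp only [pow_add, hd.neg_one_pow_mul, ← mul_sum]
  rw [mul_add, mul_left_comm, mul_left_comm 2, two_mul_sum_range_neg_one_pow, hsplit]
  ring

lemma one_sub_two_mul_sum_gluingGaps (G : Finset ℕ) (hd : Odd d)
    (hcop : Nat.Coprime d T) :
    1 - 2 * ∑ n ∈ gluingGaps G d T, (-1 : ℤ) ^ n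
      = (1 - 2 * ∑ g ∈ G, (-1 : ℤ) ^ g) * if Even T then (d : ℤ) else 1 := by
  have hdisj : Set.PairwiseDisjoint (range d : Set ℕ) (gapBlock G d T) :=
    fun x hx y hy hxy => disjoint_left.2 fun n hnx hny => hxy <| mul_mod_injOn hcop hx hy <|
      (mod_eq_of_mem_gapBlock hd.pos hnx).symm.trans (mod_eq_of_mem_gapBlock hd.pos hny)
  rw [gluingGaps, sum_biUnion hdisj, mul_sum,
    sum_congr rfl fun x _ => two_mul_sum_gapBlock G hd x, sum_add_distrib, ← sum_mul,
    sum_range_neg_one_pow_mul_mod hd hcop, sum_range_neg_one_pow_mul hd]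
  ring

end SignedSums

lemma prod_filter_even_seqC_succ {t : ℕ → ℕ} {k d : ℕ} (hd : Odd d)
    (hdvd : ∀ i ≤ k, d ∣ t i) :
    ∏ i ∈ (range (k + 2)).filter (fun i => Even (t i)), (seqC t i : ℤ)
      = (∏ i ∈ (range (k + 1)).filter (fun i => Even (t i / d)),
          (seqC (fun i => t i / d) i : ℤ))
        * if Even (t (k + 1)) then (seqC t (k + 1) : ℤ) else 1 := by
  rw [prod_filter, prod_filter, prod_range_succ _ (k + 1)]
  congr 1
  refine prod_congr rfl fun i hi => ?_
  have hik : i ≤ k := Nat.lt_succ_iff.1 (mem_range.1 hi)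
  have heven : Even (t i / d) ↔ Even (t i) := by
    conv_rhs => rw [← Nat.mul_div_cancel' (hdvd i hik)]
    simp [Nat.even_mul, Nat.not_even_iff_odd.2 hd]
  simp only [heven, seqC_div hd.pos fun j hj => hdvd j (hj.trans hik)]

theorem IsTelescopic.exists_gaps_signed_sum {t : ℕ → ℕ} {k : ℕ} (htel : IsTelescopic t k)
    (hgcd : seqD t k = 1) (h0 : Odd (t 0)) :
    ∃ G : Finset ℕ, ↑G = (genBy t (k + 1))ᶜ ∧
      1 - 2 * ∑ n ∈ G, (-1 : ℤ) ^ n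
        = ∏ i ∈ (range (k + 1)).filter (fun i => Even (t i)), (seqC t i : ℤ) := by
  induction k generalizing t with
  | zero =>
    have ht0 : t 0 = 1 := by simpa [seqD] using hgcd
    refine ⟨∅, ?_, by simp [filter_singleton, ht0]⟩
    rw [coe_empty, eq_comm, Set.compl_empty_iff, Set.eq_univ_iff_forall]
    exact fun n => ⟨fun _ => n, by simp [ht0]⟩
  | succ k ih =>
    set d := seqD t k
    have hdvd : ∀ i ≤ k, d ∣ t i := fun i hi => seqD_dvd hi
    have hd : Odd d := Odd.of_dvd_nat h0 (hdvd 0 k.zero_le)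
    have hcop : Nat.Coprime d (t (k + 1)) := by
      rw [Nat.coprime_comm, Nat.Coprime, ← seqD_succ, hgcd]
    have hc : seqC t (k + 1) = d := by simp [seqC, hgcd, d]
    have hdT : d * t (k + 1) ∈ genBy t (k + 1) := hc ▸ htel.2 (k + 1) le_add_self le_rfl
    obtain ⟨G, hG, hsum⟩ := ih ((htel.mono k.le_succ).div hd.pos hdvd)
      (by rw [seqD_div hdvd, Nat.div_self hd.pos])
      (Nat.Odd.of_mul_right (m := d) (by rwa [Nat.mul_div_cancel' (hdvd 0 k.zero_le)]))
    refine ⟨gluingGaps G d (t (k + 1)), ?_, ?_⟩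
    · rw [genBy_succ_eq_glue hd.pos (fun i hi => hdvd i (by omega)) hdT]
      exact coe_gluingGaps hd.pos hcop hG
    · rw [one_sub_two_mul_sum_gluingGaps G hd hcop, hsum, prod_filter_even_seqC_succ hd hdvd,
        hc]

lemma countOdd_coe (G : Finset ℕ) : countOdd ↑G = #(G.filter Odd) := by
  rw [countOdd, ← Set.ncard_coe_finset, coe_filter]
  rfl

lemma countEven_coe (G : Finset ℕ) : countEven ↑G = #(G.filter Even) := by
  rw [countEven, ← Set.ncard_coe_finset, coe_filter]
  rfl

lemma sum_neg_one_pow_eq_card_even_sub_card_odd (G : Finset ℕ) :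
    ∑ n ∈ G, (-1 : ℤ) ^ n = #(G.filter Even) - #(G.filter Odd) := by
  have heven : ∀ n ∈ G.filter Even, (-1 : ℤ) ^ n = 1 := fun n hn =>
    (mem_filter.1 hn).2.neg_one_pow
  have hodd : ∀ n ∈ G.filter (¬Even ·), (-1 : ℤ) ^ n = -1 := fun n hn =>
    (Nat.not_even_iff_odd.1 (mem_filter.1 hn).2).neg_one_pow
  rw [← sum_filter_add_sum_filter_not G Even, sum_congr rfl heven, sum_congr rfl hodd]
  simp [Nat.not_even_iff_odd, sub_eq_add_neg]

/-- For `S` free generated by telescopic `T = (t_0, …, t_k)` with `gcd T = 1` and `t_0`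
odd, with `I = {0 ≤ i ≤ k : t_i even}`,
`O(G(S)) - E(G(S)) = -1/2 + (1/2) ∏_{i ∈ I} c_i`, i.e.
`2 (O(G(S)) - E(G(S))) = -1 + ∏_{i ∈ I} c_i`. -/
theorem parity_free_odd_first (t : ℕ → ℕ) (k : ℕ) (htel : IsTelescopic t k)
    (hgcd : seqD t k = 1) (h0 : Odd (t 0)) :
    2 * ((countOdd (genBy t (k + 1))ᶜ : ℤ) - (countEven (genBy t (k + 1))ᶜ : ℤ))
      = -1 + ∏ i ∈ (Finset.range (k + 1)).filter (fun i => Even (t i)), (seqC t i : ℤ) := by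
  obtain ⟨G, hG, hsum⟩ := htel.exists_gaps_signed_sum hgcd h0
  rw [← hG, countOdd_coe, countEven_coe, ← hsum, sum_neg_one_pow_eq_card_even_sub_card_odd]
  ring
end

section
/- Let T = (t_0, …, t_k) be a telescopic sequence of positive integers with gcd(T) = 1 that is a minimal generating sequence for S = ⟨T⟩, let c(T) = (c_1, …, c_k), let m = min{0 ≤ i ≤ k : t_i is odd} and I = {0 ≤ i ≤ k : t_i is even}. If m > 0 (i.e., t_0 is even), then c_m · t_m · ∏_{i ∈ I} c_i > t_0; moreover c_{m+1} c_{m+2} ⋯ c_k < t_m. -/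
/-- The monoid of all nonnegative integer linear combinations of the terms `t i`
for `i` ranging over the finite index set `J` (a "subsequence"). -/
def genByIdx (t : ℕ → ℕ) (J : Finset ℕ) : Set ℕ :=
  {s | ∃ x : ℕ → ℕ, s = ∑ i ∈ J, x i * t i}

lemma seqD_dvd_t (t : ℕ → ℕ) {i j : ℕ} (h : j ≤ i) : seqD t i ∣ t j :=
  Finset.gcd_dvd (Finset.mem_range.2 (Nat.lt_succ_of_le h))

lemma seqD_succ_dvd (t : ℕ → ℕ) (i : ℕ) : seqD t (i + 1) ∣ seqD t i :=
  Finset.dvd_gcd fun j hj =>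
    seqD_dvd_t t (le_trans (Nat.lt_succ_iff.1 (Finset.mem_range.1 hj)) (Nat.le_succ i))

lemma seqD_pos (t : ℕ → ℕ) (h0 : 0 < t 0) (i : ℕ) : 0 < seqD t i := by
  rcases Nat.eq_zero_or_pos (seqD t i) with h | h
  · have := seqD_dvd_t t (Nat.zero_le i)
    rw [h] at this
    omega
  · exact h

lemma seqC_mul (t : ℕ → ℕ) (i : ℕ) : seqC t (i + 1) * seqD t (i + 1) = seqD t i := by
  unfold seqC
  simp only [Nat.add_sub_cancel]
  exact Nat.div_mul_cancel (seqD_succ_dvd t i)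

lemma seqD_zero (t : ℕ → ℕ) : seqD t 0 = t 0 := by
  simp [seqD, Finset.range_one]

lemma prod_seqC (t : ℕ → ℕ) (h0 : 0 < t 0) (a : ℕ) :
    ∀ b, a ≤ b → (∏ i ∈ Finset.Icc (a + 1) b, seqC t i) * seqD t b = seqD t a := by
  intro b
  induction b with
  | zero =>
    intro h
    have : a = 0 := by omega
    subst this
    simp
  | succ b ih =>
    intro h
    rcases Nat.lt_or_ge a (b + 1) with h' | h'
    · have hab : a ≤ b := by omega
      rw [← Finset.insert_Icc_right_eq_Icc_add_one (by omega), Finset.prod_insert (by simp)]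
      calc (seqC t (b + 1) * ∏ i ∈ Finset.Icc (a + 1) b, seqC t i) * seqD t (b + 1)
          = (∏ i ∈ Finset.Icc (a + 1) b, seqC t i) * (seqC t (b + 1) * seqD t (b + 1)) := by ring
        _ = (∏ i ∈ Finset.Icc (a + 1) b, seqC t i) * seqD t b := by rw [seqC_mul]
        _ = seqD t a := ih hab
    · have : a = b + 1 := by omega
      subst this
      simp

lemma seqC_pos (t : ℕ → ℕ) (h0 : 0 < t 0) {i : ℕ} (hi : 1 ≤ i) : 0 < seqC t i := by
  obtain ⟨j, rfl⟩ := Nat.exists_eq_add_of_le hi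
  rw [Nat.add_comm] at *
  have h := seqC_mul t j
  have := seqD_pos t h0 j
  by_contra hc
  push_neg at hc
  interval_cases (seqC t (j + 1))
  simp at h
  omega

/-- For `T = (t_0, …, t_k)` telescopic with `gcd T = 1`, minimal (no proper subsequence
generates `⟨T⟩`), `m` the least index with `t_m` odd and `I = {0 ≤ i ≤ k : t_i even}`:
if `m > 0` then `c_m · t_m · ∏_{i ∈ I} c_i > t_0` (with `c_0 = 1`), and moreover
`c_{m+1} c_{m+2} ⋯ c_k < t_m`. -/
theorem key_inequality (t : ℕ → ℕ) (k : ℕ) (htel : IsTelescopic t k)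
    (hgcd : seqD t k = 1)
    (hmin : ∀ J : Finset ℕ, J ⊂ Finset.range (k + 1) →
      genByIdx t J ≠ genBy t (k + 1))
    (m : ℕ) (hm0 : 0 < m) (hmk : m ≤ k) (hmodd : Odd (t m))
    (hmmin : ∀ i < m, Even (t i)) :
    t 0 < seqC t m * t m *
        ∏ i ∈ (Finset.range (k + 1)).filter (fun i => Even (t i)),
          (if i = 0 then 1 else seqC t i) ∧
      ∏ i ∈ Finset.Icc (m + 1) k, seqC t i < t m := by
  have h0 : 0 < t 0 := htel.1 0 (Nat.zero_le k)
  have htm : 0 < t m := htel.1 m hmk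
  -- the tail product equals d_m
  have hdm : ∏ i ∈ Finset.Icc (m + 1) k, seqC t i = seqD t m := by
    have := prod_seqC t h0 m k hmk
    rwa [hgcd, mul_one] at this
  -- d_m < t_m using minimality
  have hdmtm : seqD t m < t m := by
    have hdvd : seqD t m ∣ t m := seqD_dvd_t t le_rfl
    rcases lt_or_eq_of_le (Nat.le_of_dvd htm hdvd) with h | h
    · exact h
    · exfalso
      have htm0 : t m ∣ t 0 := h ▸ seqD_dvd_t t (Nat.zero_le m)
      have h0mem : (0 : ℕ) ∈ Finset.range (k + 1) := by simp
      have hmJ : m ∈ (Finset.range (k + 1)).erase 0 := by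
        simp only [Finset.mem_erase, Finset.mem_range]
        omega
      apply hmin ((Finset.range (k + 1)).erase 0)
        (Finset.erase_ssubset h0mem)
      ext s
      constructor
      · rintro ⟨x, rfl⟩
        refine ⟨fun i => if i = 0 then 0 else x i, ?_⟩
        show _ = ∑ i ∈ Finset.range (k + 1), (if i = 0 then 0 else x i) * t i
        have e1 : ∑ i ∈ Finset.range (k + 1), (if i = 0 then 0 else x i) * t i
            = ∑ i ∈ (Finset.range (k + 1)).erase 0, (if i = 0 then 0 else x i) * t i := by
          refine (Finset.sum_subset (Finset.erase_subset _ _) fun i hir hi => ?_).symm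
          have : i = 0 := by
            by_contra hc
            exact hi (Finset.mem_erase.2 ⟨hc, hir⟩)
          simp [this]
        rw [e1]
        exact Finset.sum_congr rfl fun i hi => by
          rw [if_neg (Finset.ne_of_mem_erase hi)]
      · rintro ⟨x, rfl⟩
        set q := t 0 / t m with hq
        have hqq : q * t m = t 0 := Nat.div_mul_cancel htm0
        refine ⟨fun i => if i = m then x m + x 0 * q else x i, ?_⟩
        show _ = ∑ i ∈ (Finset.range (k + 1)).erase 0,
          (if i = m then x m + x 0 * q else x i) * t i
        set J := (Finset.range (k + 1)).erase 0 with hJ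
        set R := ∑ i ∈ J.erase m, x i * t i with hR
        have e1 : ∑ i ∈ J, (if i = m then x m + x 0 * q else x i) * t i
            = (x m + x 0 * q) * t m + R := by
          rw [← Finset.add_sum_erase J _ hmJ, if_pos rfl]
          congr 1
          exact Finset.sum_congr rfl fun i hi => by
            rw [if_neg (Finset.ne_of_mem_erase hi)]
        have e2 : ∑ i ∈ Finset.range (k + 1), x i * t i = x 0 * t 0 + ∑ i ∈ J, x i * t i :=
          (Finset.add_sum_erase _ _ h0mem).symm
        have e3 : ∑ i ∈ J, x i * t i = x m * t m + R :=
          (Finset.add_sum_erase _ _ hmJ).symm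
        have h1 : x 0 * t 0 = x 0 * q * t m := by rw [mul_assoc, hqq]
        rw [e2, e3, e1, h1]
        ring
  refine ⟨?_, hdm ▸ hdmtm⟩
  -- Part 1
  set I := (Finset.range (k + 1)).filter (fun i => Even (t i)) with hI
  have h0I : (0 : ℕ) ∈ I := by
    simp only [hI, Finset.mem_filter, Finset.mem_range]
    exact ⟨by omega, hmmin 0 hm0⟩
  have hP : ∏ i ∈ I, (if i = 0 then 1 else seqC t i) = ∏ i ∈ I.erase 0, seqC t i := by
    rw [← Finset.mul_prod_erase I _ h0I, if_pos rfl, one_mul]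
    exact Finset.prod_congr rfl fun i hi => if_neg (Finset.ne_of_mem_erase hi)
  have hIerase : I.erase 0 = (Finset.Icc 1 k).filter (fun i => Even (t i)) := by
    ext i
    simp only [hI, Finset.mem_erase, Finset.mem_filter, Finset.mem_range, Finset.mem_Icc,
      Nat.lt_succ_iff]
    constructor
    · rintro ⟨h1, h2, h3⟩; exact ⟨⟨by omega, h2⟩, h3⟩
    · rintro ⟨⟨h1, h2⟩, h3⟩; exact ⟨by omega, h2, h3⟩
  set O := (Finset.Icc 1 k).filter (fun i => ¬ Even (t i)) with hO
  have hsplit : (∏ i ∈ I.erase 0, seqC t i) * (∏ i ∈ O, seqC t i)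
      = ∏ i ∈ Finset.Icc 1 k, seqC t i := by
    rw [hIerase]
    exact Finset.prod_filter_mul_prod_filter_not _ _ _
  have ht0 : ∏ i ∈ Finset.Icc 1 k, seqC t i = t 0 := by
    have := prod_seqC t h0 0 k (Nat.zero_le k)
    rwa [hgcd, mul_one, seqD_zero] at this
  have hmO : m ∈ O := by
    simp only [hO, Finset.mem_filter, Finset.mem_Icc]
    exact ⟨⟨hm0, hmk⟩, Nat.not_even_iff_odd.2 hmodd⟩
  have hOsplit : ∏ i ∈ O, seqC t i = seqC t m * ∏ i ∈ O.erase m, seqC t i :=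
    (Finset.mul_prod_erase O _ hmO).symm
  have hsub : O.erase m ⊆ Finset.Icc (m + 1) k := by
    intro i hi
    simp only [hO, Finset.mem_erase, Finset.mem_filter, Finset.mem_Icc] at hi
    obtain ⟨hne, ⟨h1, h2⟩, hodd⟩ := hi
    simp only [Finset.mem_Icc]
    refine ⟨?_, h2⟩
    by_contra hc
    push_neg at hc
    exact hodd (hmmin i (by omega))
  have hQle : ∏ i ∈ O.erase m, seqC t i ≤ ∏ i ∈ Finset.Icc (m + 1) k, seqC t i :=
    Finset.prod_le_prod_of_subset_of_one_le' hsub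
      (fun i hi _ => seqC_pos t h0 (by simp only [Finset.mem_Icc] at hi; omega))
  have hQlt : ∏ i ∈ O.erase m, seqC t i < t m := lt_of_le_of_lt (hdm ▸ hQle) hdmtm
  have hPEpos : 0 < ∏ i ∈ I.erase 0, seqC t i :=
    Finset.prod_pos fun i hi => seqC_pos t h0 (by
      rw [hIerase] at hi
      simp only [Finset.mem_filter, Finset.mem_Icc] at hi
      omega)
  have hcmpos : 0 < seqC t m := seqC_pos t h0 hm0
  rw [hP]
  calc t 0 = (∏ i ∈ I.erase 0, seqC t i) * (seqC t m * ∏ i ∈ O.erase m, seqC t i) := by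
        rw [← hOsplit, hsplit, ht0]
    _ < (∏ i ∈ I.erase 0, seqC t i) * (seqC t m * t m) :=
        mul_lt_mul_of_pos_left (mul_lt_mul_of_pos_left hQlt hcmpos) hPEpos
    _ = seqC t m * t m * ∏ i ∈ I.erase 0, seqC t i := by ring
end
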